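/- arXiv:2312.13751 — 12 statements merged into one kernel-verified Lean document; each statement's English description precedes it below -/
import Mathlib

section
/- Let K be a field of characteristic p and q = p^h. For v = (v_1, v_2, v_3) ∈ K^3 define D_1(v) = det [[v_1, v_1^{q^2}, v_1^{q^6}], [v_2, v_2^{q^2}, v_2^{q^6}], [v_3, v_3^{q^2}, v_3^{q^6}]], D_2(v) = det [[v_1, v_1^{q^2}, v_1^{q^4}], [v_2, v_2^{q^2}, v_2^{q^4}], [v_3, v_3^{q^2}, v_3^{q^4}]], and E_1(v) = det [[v_1, v_1^{q^4}, v_1^{q^6}], [v_2, v_2^{q^4}, v_2^{q^6}], [v_3, v_3^{q^4}, v_3^{q^6}]]. Let M be a 3×3 matrix over K all of whose entries m satisfy m^{q^2} = m, with det(M) ≠ 0, and let v ∈ K^3 with D_2(v) ≠ 0 and E_1(v) ≠ 0. Then D_2(Mv) ≠ 0, E_1(Mv) ≠ 0, and D_1(Mv)^{q^2+1} / (E_1(Mv)^{q^2} · D_2(Mv)) = D_1(v)^{q^2+1} / (E_1(v)^{q^2} · D_2(v)). -/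
/-- Invariance of u = D₁^(q²+1)/(E₁^(q²)·D₂) under invertible matrices whose
entries are fixed by the q²-power Frobenius. -/
theorem dickson_invariant_mulVec (p h q : ℕ) (hp : p.Prime) (hh : 1 ≤ h) (hq : q = p ^ h)
    (K : Type*) [Field K] [CharP K p]
    (D1 D2 E1 : (Fin 3 → K) → K)
    (hD1 : ∀ u : Fin 3 → K, D1 u =
      Matrix.det !![u 0, u 0 ^ q ^ 2, u 0 ^ q ^ 6;
                    u 1, u 1 ^ q ^ 2, u 1 ^ q ^ 6;
                    u 2, u 2 ^ q ^ 2, u 2 ^ q ^ 6])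
    (hD2 : ∀ u : Fin 3 → K, D2 u =
      Matrix.det !![u 0, u 0 ^ q ^ 2, u 0 ^ q ^ 4;
                    u 1, u 1 ^ q ^ 2, u 1 ^ q ^ 4;
                    u 2, u 2 ^ q ^ 2, u 2 ^ q ^ 4])
    (hE1 : ∀ u : Fin 3 → K, E1 u =
      Matrix.det !![u 0, u 0 ^ q ^ 4, u 0 ^ q ^ 6;
                    u 1, u 1 ^ q ^ 4, u 1 ^ q ^ 6;
                    u 2, u 2 ^ q ^ 4, u 2 ^ q ^ 6])
    (M : Matrix (Fin 3) (Fin 3) K) (hM : ∀ i j, M i j ^ q ^ 2 = M i j)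
    (hMdet : M.det ≠ 0)
    (v : Fin 3 → K) (hD2v : D2 v ≠ 0) (hE1v : E1 v ≠ 0) :
    D2 (M.mulVec v) ≠ 0 ∧ E1 (M.mulVec v) ≠ 0 ∧
      D1 (M.mulVec v) ^ (q ^ 2 + 1) / (E1 (M.mulVec v) ^ q ^ 2 * D2 (M.mulVec v)) =
        D1 v ^ (q ^ 2 + 1) / (E1 v ^ q ^ 2 * D2 v) := by
  haveI : ExpChar K p := ExpChar.prime hp
  have hMpow : ∀ (k : ℕ) (i j : Fin 3), M i j ^ (q ^ 2) ^ k = M i j := by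
    intro k i j
    induction k with
    | zero => simp
    | succ n ih => rw [pow_succ, pow_mul, ih, hM]
  have hmv : ∀ (k : ℕ) (i : Fin 3),
      (M.mulVec v) i ^ (q ^ 2) ^ k = ∑ j, M i j * v j ^ (q ^ 2) ^ k := by
    intro k i
    have he : (q ^ 2) ^ k = p ^ (h * (2 * k)) := by
      rw [hq, ← pow_mul, ← pow_mul]
    rw [Matrix.mulVec, dotProduct, he, sum_pow_char_pow]
    refine Finset.sum_congr rfl fun j _ => ?_
    rw [mul_pow, ← he, hMpow]
  have hmvx : ∀ (k : ℕ) (i : Fin 3),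
      (M i 0 * v 0 + M i 1 * v 1 + M i 2 * v 2) ^ (q ^ 2) ^ k =
        M i 0 * v 0 ^ (q ^ 2) ^ k + M i 1 * v 1 ^ (q ^ 2) ^ k
          + M i 2 * v 2 ^ (q ^ 2) ^ k := by
    intro k i
    simpa [Matrix.mulVec, dotProduct, Fin.sum_univ_three] using hmv k i
  have hdet : ∀ (A B a b : ℕ), q ^ A = (q ^ 2) ^ a → q ^ B = (q ^ 2) ^ b →
      Matrix.det !![(M.mulVec v) 0, (M.mulVec v) 0 ^ q ^ A, (M.mulVec v) 0 ^ q ^ B;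
                    (M.mulVec v) 1, (M.mulVec v) 1 ^ q ^ A, (M.mulVec v) 1 ^ q ^ B;
                    (M.mulVec v) 2, (M.mulVec v) 2 ^ q ^ A, (M.mulVec v) 2 ^ q ^ B]
      = M.det * Matrix.det !![v 0, v 0 ^ q ^ A, v 0 ^ q ^ B;
                    v 1, v 1 ^ q ^ A, v 1 ^ q ^ B;
                    v 2, v 2 ^ q ^ A, v 2 ^ q ^ B] := by
    intro A B a b hA hB
    rw [← Matrix.det_mul]
    congr 1
    ext i j
    fin_cases i <;> fin_cases j <;>
      simp [Matrix.mul_apply, Fin.sum_univ_three, Matrix.mulVec, dotProduct,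
        hA, hB, hmvx]
  have e2 : q ^ 2 = (q ^ 2) ^ 1 := (pow_one _).symm
  have e4 : q ^ 4 = (q ^ 2) ^ 2 := by rw [← pow_mul]
  have e6 : q ^ 6 = (q ^ 2) ^ 3 := by rw [← pow_mul]
  have hD1' : D1 (M.mulVec v) = M.det * D1 v := by
    rw [hD1, hD1]; exact hdet 2 6 1 3 e2 e6
  have hD2' : D2 (M.mulVec v) = M.det * D2 v := by
    rw [hD2, hD2]; exact hdet 2 4 1 2 e2 e4
  have hE1' : E1 (M.mulVec v) = M.det * E1 v := by
    rw [hE1, hE1]; exact hdet 4 6 2 3 e4 e6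
  refine ⟨by rw [hD2']; exact mul_ne_zero hMdet hD2v,
          by rw [hE1']; exact mul_ne_zero hMdet hE1v, ?_⟩
  rw [hD1', hD2', hE1']
  have hd : M.det ^ q ^ 2 ≠ 0 := pow_ne_zero _ hMdet
  field_simp
  ring
end

section
/- Let K be a field of characteristic p and q = p^h. Let a, b, c, d ∈ K satisfy a^q = a, b^q = b, c^q = c, d^q = d and ad − bc ≠ 0. Let x ∈ K with cx + d ≠ 0 and x^q ≠ x, and set w = (ax + b)/(cx + d). Then w^q ≠ w and (w^{q^2} − w)^{q+1} / (w^q − w)^{q^2+1} = (x^{q^2} − x)^{q+1} / (x^q − x)^{q^2+1}. -/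
/-!
The Frobenius `y ↦ y ^ q` and its square are field endomorphisms fixing the coefficients, so they
commute with the Möbius map `M`. Since `M y - M z = (a d - b c) (y - z) / ((c y + d) (c z + d))`,
this gives `w ^ q - w = Δ (x ^ q - x) / D ^ (q + 1)` and
`w ^ (q ^ 2) - w = Δ (x ^ (q ^ 2) - x) / D ^ (q ^ 2 + 1)` with `D = c x + d`, `Δ = a d - b c`.
Raising these to the powers `q + 1` and `q ^ 2 + 1`, the powers of `D` agree, and so do the powers
of `Δ`, because `Δ ^ q = Δ`.
-/

section Moebius

variable {K : Type*} [Field K] {a b c d : K}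

theorem moebius_sub_moebius {y z : K} (hy : c * y + d ≠ 0) (hz : c * z + d ≠ 0) :
    (a * y + b) / (c * y + d) - (a * z + b) / (c * z + d) =
      (a * d - b * c) * (y - z) / ((c * y + d) * (c * z + d)) := by
  rw [div_sub_div _ _ hy hz]
  ring

theorem map_moebius_sub_moebius (σ : K →+* K) (ha : σ a = a) (hb : σ b = b) (hc : σ c = c)
    (hd : σ d = d) {x : K} (hx : c * x + d ≠ 0) :
    σ ((a * x + b) / (c * x + d)) - (a * x + b) / (c * x + d) =
      (a * d - b * c) * (σ x - x) / (σ (c * x + d) * (c * x + d)) := by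
  have hden : σ (c * x + d) = c * σ x + d := by simp only [map_add, map_mul, hc, hd]
  have hnum : σ (a * x + b) = a * σ x + b := by simp only [map_add, map_mul, ha, hb]
  rw [map_div₀, hnum, hden, moebius_sub_moebius _ hx]
  rwa [← hden, map_ne_zero]

end Moebius

theorem div_pow_div_div_pow_of_pow_eq {K : Type*} [Field K] {Δ P Q u v : K} {m n : ℕ}
    (hΔ : Δ ^ m = Δ ^ n) (hPQ : P ^ m = Q ^ n) (hΔ0 : Δ ≠ 0) (hQ : Q ≠ 0) :
    (Δ * v / P) ^ m / (Δ * u / Q) ^ n = v ^ m / u ^ n := by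
  rw [div_pow, div_pow, mul_pow, mul_pow, hΔ, hPQ,
    div_div_div_cancel_right₀ (pow_ne_zero _ hQ), mul_div_mul_left _ _ (pow_ne_zero _ hΔ0)]

theorem pgl2_invariant_general (p h q : ℕ) (hp : p.Prime) (hq : q = p ^ h)
    (K : Type*) [Field K] [CharP K p]
    (a b c d : K) (ha : a ^ q = a) (hb : b ^ q = b) (hc : c ^ q = c) (hd : d ^ q = d)
    (hdet : a * d - b * c ≠ 0)
    (x : K) (hden : c * x + d ≠ 0) (hx : x ^ q ≠ x)
    (w : K) (hw : w = (a * x + b) / (c * x + d)) :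
    w ^ q ≠ w ∧
      (w ^ q ^ 2 - w) ^ (q + 1) / (w ^ q - w) ^ (q ^ 2 + 1) =
        (x ^ q ^ 2 - x) ^ (q + 1) / (x ^ q - x) ^ (q ^ 2 + 1) := by
  have : ExpChar K p := .prime hp
  set F : K →+* K := iterateFrobenius K p h
  have hF : ∀ y, F y = y ^ q := fun y => by rw [hq]; rfl
  have hF2 : ∀ y, F.comp F y = y ^ q ^ 2 := fun y => by
    rw [RingHom.comp_apply, hF, hF, ← pow_mul, sq]
  have hF2fix : ∀ {y}, y ^ q = y → F.comp F y = y := fun hy => by rw [hF2, sq, pow_mul, hy, hy]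
  have hwq := map_moebius_sub_moebius F ((hF a).trans ha) ((hF b).trans hb) ((hF c).trans hc)
    ((hF d).trans hd) hden
  have hwq2 := map_moebius_sub_moebius (F.comp F) (hF2fix ha) (hF2fix hb) (hF2fix hc) (hF2fix hd) hden
  rw [← hw, hF, hF, hF] at hwq
  rw [← hw, hF2, hF2, hF2] at hwq2
  have hΔq : (a * d - b * c) ^ q = a * d - b * c := by
    rw [← hF, map_sub, map_mul, map_mul, hF, hF, hF, hF, ha, hb, hc, hd]
  refine ⟨?_, ?_⟩
  · rw [← sub_ne_zero, hwq]
    exact div_ne_zero (mul_ne_zero hdet (sub_ne_zero.mpr hx))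
      (mul_ne_zero (pow_ne_zero _ hden) hden)
  · rw [hwq, hwq2]
    refine div_pow_div_div_pow_of_pow_eq ?_ ?_ hdet (mul_ne_zero (pow_ne_zero _ hden) hden)
    · rw [pow_succ, pow_succ, hΔq, sq, pow_mul, hΔq, hΔq]
    · rw [← pow_succ, ← pow_succ, ← pow_mul, ← pow_mul, Nat.mul_comm]

/-- Invariance of (x^(q²)−x)^(q+1)/(x^q−x)^(q²+1) under fractional linear maps
with coefficients fixed by the q-power Frobenius. -/
theorem pgl2_invariant (p h q : ℕ) (hp : p.Prime) (hh : 1 ≤ h) (hq : q = p ^ h)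
    (K : Type*) [Field K] [CharP K p]
    (a b c d : K) (ha : a ^ q = a) (hb : b ^ q = b) (hc : c ^ q = c) (hd : d ^ q = d)
    (hdet : a * d - b * c ≠ 0)
    (x : K) (hden : c * x + d ≠ 0) (hx : x ^ q ≠ x)
    (w : K) (hw : w = (a * x + b) / (c * x + d)) :
    w ^ q ≠ w ∧
      (w ^ q ^ 2 - w) ^ (q + 1) / (w ^ q - w) ^ (q ^ 2 + 1) =
        (x ^ q ^ 2 - x) ^ (q + 1) / (x ^ q - x) ^ (q ^ 2 + 1) :=
  pgl2_invariant_general p h q hp hq K a b c d ha hb hc hd hdet x hden hx w hw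
end

section
/- Let K be a field of characteristic p, q = p^h, and let x, y ∈ K satisfy y^q + y = x^{q+1}. Define D_6 = det [[x, x^{q^2}, x^{q^6}], [y, y^{q^2}, y^{q^6}], [1, 1, 1]] and D_4 = det [[x, x^{q^2}, x^{q^4}], [y, y^{q^2}, y^{q^4}], [1, 1, 1]]. If x^{q^2} ≠ x and y + y^{q^3} − x^{q^3+1} ≠ 0, then D_4 ≠ 0 and D_6 / D_4 = ( (y + y^{q^5} − x^{q^5+1}) / (y + y^{q^3} − x^{q^3+1}) )^q. -/
/-- The ratio D₆/D₄ of Hermitian Dickson determinants is a q-th power. -/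
theorem hermitian_D6_div_D4 (p h q : ℕ) (hp : p.Prime) (hh : 1 ≤ h) (hq : q = p ^ h)
    (K : Type*) [Field K] [CharP K p]
    (x y : K) (hxy : y ^ q + y = x ^ (q + 1))
    (D6 D4 : K)
    (hD6 : D6 = Matrix.det !![x, x ^ q ^ 2, x ^ q ^ 6;
                              y, y ^ q ^ 2, y ^ q ^ 6;
                              1, 1, 1])
    (hD4 : D4 = Matrix.det !![x, x ^ q ^ 2, x ^ q ^ 4;
                              y, y ^ q ^ 2, y ^ q ^ 4;
                              1, 1, 1])
    (hx : x ^ q ^ 2 ≠ x) (hy : y + y ^ q ^ 3 - x ^ (q ^ 3 + 1) ≠ 0) :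
    D4 ≠ 0 ∧
      D6 / D4 = ((y + y ^ q ^ 5 - x ^ (q ^ 5 + 1)) / (y + y ^ q ^ 3 - x ^ (q ^ 3 + 1))) ^ q := by
  haveI := Fact.mk hp
  -- Frobenius is additive
  have fadd : ∀ a b : K, (a + b) ^ q = a ^ q + b ^ q := by
    intro a b; rw [hq]; exact add_pow_char_pow a b p h
  have fsub : ∀ a b : K, (a - b) ^ q = a ^ q - b ^ q := by
    intro a b
    have h2 := fadd (a - b) b
    rw [sub_add_cancel] at h2
    linear_combination -h2
  -- iterated powers
  have kkn : ∀ (t : K) (i : ℕ), (t ^ q ^ i) ^ q = t ^ q ^ (i + 1) := by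
    intro t i; rw [← pow_mul, ← pow_succ]
  have kk1 : ∀ t : K, (t ^ q) ^ q = t ^ q ^ 2 := fun t => by
    rw [← pow_mul, ← pow_two]
  have kk2 : ∀ t : K, (t ^ q ^ 2) ^ q = t ^ q ^ 3 := fun t => kkn t 2
  have kk3 : ∀ t : K, (t ^ q ^ 3) ^ q = t ^ q ^ 4 := fun t => kkn t 3
  have kk4 : ∀ t : K, (t ^ q ^ 4) ^ q = t ^ q ^ 5 := fun t => kkn t 4
  have kk5 : ∀ t : K, (t ^ q ^ 5) ^ q = t ^ q ^ 6 := fun t => kkn t 5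
  -- express the iterated Frobenius images of y
  have e1 : y ^ q = x ^ q * x - y := by linear_combination hxy
  have e2 : y ^ q ^ 2 = x ^ q ^ 2 * x ^ q - x ^ q * x + y := by
    rw [← kk1 y, e1, fsub, mul_pow, kk1 x, e1]; ring
  have e3 : y ^ q ^ 3 = x ^ q ^ 3 * x ^ q ^ 2 - x ^ q ^ 2 * x ^ q + x ^ q * x - y := by
    rw [← kk2 y, e2, fadd, fsub, mul_pow, mul_pow, kk2 x, kk1 x, e1]; ring
  have e4 : y ^ q ^ 4 = x ^ q ^ 4 * x ^ q ^ 3 - x ^ q ^ 3 * x ^ q ^ 2 + x ^ q ^ 2 * x ^ q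
      - x ^ q * x + y := by
    rw [← kk3 y, e3, fsub, fadd, fsub, mul_pow, mul_pow, mul_pow, kk3 x, kk2 x, kk1 x, e1]; ring
  have e5 : y ^ q ^ 5 = x ^ q ^ 5 * x ^ q ^ 4 - x ^ q ^ 4 * x ^ q ^ 3 + x ^ q ^ 3 * x ^ q ^ 2
      - x ^ q ^ 2 * x ^ q + x ^ q * x - y := by
    rw [← kk4 y, e4, fadd, fsub, fadd, fsub, mul_pow, mul_pow, mul_pow, mul_pow,
      kk4 x, kk3 x, kk2 x, kk1 x, e1]; ring
  have e6 : y ^ q ^ 6 = x ^ q ^ 6 * x ^ q ^ 5 - x ^ q ^ 5 * x ^ q ^ 4 + x ^ q ^ 4 * x ^ q ^ 3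
      - x ^ q ^ 3 * x ^ q ^ 2 + x ^ q ^ 2 * x ^ q - x ^ q * x + y := by
    rw [← kk5 y, e5, fsub, fadd, fsub, fadd, fsub, mul_pow, mul_pow, mul_pow, mul_pow, mul_pow,
      kk5 x, kk4 x, kk3 x, kk2 x, kk1 x, e1]; ring
  -- factor D4
  have hD4' : D4 = (x ^ q ^ 2 - x) * (x ^ q ^ 3 - x ^ q) * (x ^ q ^ 4 - x ^ q ^ 2) := by
    rw [hD4]
    simp only [Matrix.det_fin_three, Matrix.cons_val', Matrix.cons_val_zero, Matrix.cons_val_one,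
      Matrix.head_cons, Matrix.empty_val', Matrix.cons_val_fin_one, Matrix.head_fin_const,
      Matrix.cons_val_two, Matrix.tail_cons, Matrix.of_apply]
    rw [e2, e4]; ring
  have hA : x ^ q ^ 2 - x ≠ 0 := sub_ne_zero.mpr hx
  have hA1 : (x ^ q ^ 2 - x) ^ q = x ^ q ^ 3 - x ^ q := by rw [fsub, kk2 x]
  have hA2 : ((x ^ q ^ 2 - x) ^ q) ^ q = x ^ q ^ 4 - x ^ q ^ 2 := by
    rw [hA1, fsub, kk3 x, kk1 x]
  have hD4ne : D4 ≠ 0 := by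
    rw [hD4', ← hA1, ← hA2]
    exact mul_ne_zero (mul_ne_zero hA (pow_ne_zero q hA)) (pow_ne_zero q (pow_ne_zero q hA))
  refine ⟨hD4ne, ?_⟩
  rw [pow_succ x (q ^ 3)] at hy ⊢
  rw [pow_succ x (q ^ 5)]
  have hN3 : (y + y ^ q ^ 3 - x ^ q ^ 3 * x) ^ q
      = y ^ q + y ^ q ^ 4 - x ^ q ^ 4 * x ^ q := by
    rw [fsub, fadd, mul_pow, kk3 x, kk3 y]
  have hN5 : (y + y ^ q ^ 5 - x ^ q ^ 5 * x) ^ q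
      = y ^ q + y ^ q ^ 6 - x ^ q ^ 6 * x ^ q := by
    rw [fsub, fadd, mul_pow, kk5 x, kk5 y]
  rw [div_pow, div_eq_div_iff hD4ne (pow_ne_zero q hy), hN3, hN5, hD4', hD6]
  simp only [Matrix.det_fin_three, Matrix.cons_val', Matrix.cons_val_zero, Matrix.cons_val_one,
    Matrix.head_cons, Matrix.empty_val', Matrix.cons_val_fin_one, Matrix.head_fin_const,
    Matrix.cons_val_two, Matrix.tail_cons, Matrix.of_apply]
  simp only [e1, e2, e3, e4, e5, e6]
  ring
end

section
/- Let K be a field of characteristic p, q = p^h, and let x, y ∈ K satisfy y^q + y = x^{q+1}. Set x̃ = x^{q+1}. Then det [[x, x^{q^2}, x^{q^6}], [y, y^{q^2}, y^{q^6}], [1, 1, 1]] = (x − x^{q^2})·(x̃^{q^2} − x̃^{q^3} + x̃^{q^4} − x̃^{q^5}) + (x^{q^6} − x^{q^2})·(x̃ − x̃^{q}). -/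
/-- The Dickson determinant D₁ on the Hermitian curve expressed via x and x̃ = x^(q+1). -/
theorem hermitian_D1_in_x (p h q : ℕ) (hp : p.Prime) (hh : 1 ≤ h) (hq : q = p ^ h)
    (K : Type*) [Field K] [CharP K p]
    (x y : K) (hxy : y ^ q + y = x ^ (q + 1))
    (xt : K) (hxt : xt = x ^ (q + 1)) :
    Matrix.det !![x, x ^ q ^ 2, x ^ q ^ 6;
                  y, y ^ q ^ 2, y ^ q ^ 6;
                  1, 1, 1] =
      (x - x ^ q ^ 2) * (xt ^ q ^ 2 - xt ^ q ^ 3 + xt ^ q ^ 4 - xt ^ q ^ 5) +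
        (x ^ q ^ 6 - x ^ q ^ 2) * (xt - xt ^ q) := by
  haveI : Fact p.Prime := ⟨hp⟩
  set f : K →+* K := iterateFrobenius K p h with hfdef
  have hf : ∀ a : K, f a = a ^ q := by
    intro a; rw [hfdef, iterateFrobenius_def, hq]
  have hfa : ∀ (a : K) (k : ℕ), f (a ^ q ^ k) = a ^ q ^ (k + 1) := by
    intro a k; rw [hf, ← pow_mul, ← pow_succ]
  have key : ∀ k, y ^ q ^ (k + 1) = xt ^ q ^ k - y ^ q ^ k := by
    intro k
    induction k with
    | zero =>
      simp only [pow_zero, pow_one]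
      rw [hxt]; linear_combination hxy
    | succ n ih =>
      have := congrArg f ih
      rw [map_sub, hfa, hfa, hfa] at this
      exact this
  have e0 := key 0
  have e1 := key 1
  have e2 := key 2
  have e3 := key 3
  have e4 := key 4
  have e5 := key 5
  norm_num at e0 e1 e2 e3 e4 e5
  have y2 : y ^ q ^ 2 = xt ^ q - xt + y := by
    rw [e1, e0]; ring
  have y6 : y ^ q ^ 6 = xt ^ q ^ 5 - xt ^ q ^ 4 + xt ^ q ^ 3 - xt ^ q ^ 2 + xt ^ q - xt + y := by
    rw [e5, e4, e3, e2, e1, e0]; ring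
  rw [Matrix.det_fin_three, y2, y6]
  simp [Matrix.cons_val_one]
  ring
end

section
/- Let K be a field of characteristic p, q = p^h, and let x, y ∈ K satisfy y^q + y = x^{q+1}. Set x̃ = x^{q+1}. Then det [[x, x^{q^4}, x^{q^6}], [y, y^{q^4}, y^{q^6}], [1, 1, 1]] = (x^{q^6} − x^{q^4})·(x̃ − x̃^{q} + x̃^{q^2} − x̃^{q^3}) + (x − x^{q^4})·(x̃^{q^4} − x̃^{q^5}). -/
/-- The dual Dickson determinant E₁ on the Hermitian curve expressed via x and x̃ = x^(q+1). -/
theorem hermitian_E1_in_x (p h q : ℕ) (hp : p.Prime) (hh : 1 ≤ h) (hq : q = p ^ h)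
    (K : Type*) [Field K] [CharP K p]
    (x y : K) (hxy : y ^ q + y = x ^ (q + 1))
    (xt : K) (hxt : xt = x ^ (q + 1)) :
    Matrix.det !![x, x ^ q ^ 4, x ^ q ^ 6;
                  y, y ^ q ^ 4, y ^ q ^ 6;
                  1, 1, 1] =
      (x ^ q ^ 6 - x ^ q ^ 4) * (xt - xt ^ q + xt ^ q ^ 2 - xt ^ q ^ 3) +
        (x - x ^ q ^ 4) * (xt ^ q ^ 4 - xt ^ q ^ 5) := by
  haveI : Fact p.Prime := ⟨hp⟩
  have frob : ∀ a b : K, (a - b) ^ q = a ^ q - b ^ q := by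
    intro a b; rw [hq]; exact sub_pow_char_pow ..
  have step : ∀ k : ℕ, y ^ q ^ (k + 1) = (y ^ q ^ k) ^ q := by
    intro k; rw [← pow_mul, ← pow_succ]
  have h1 : y ^ q = xt - y := by rw [hxt, ← hxy]; ring
  have h2 : y ^ q ^ 2 = (xt ^ q) - (xt - y) := by
    have e : y ^ q ^ 2 = (y ^ q ^ 1) ^ q := step 1
    rw [e, pow_one, h1, frob, h1]
  have h3 : y ^ q ^ 3 = (xt ^ q) ^ q - (xt ^ q - (xt - y)) := by
    rw [step 2, h2, frob, frob, h1]
  have h4 : y ^ q ^ 4 = ((xt ^ q) ^ q) ^ q - ((xt ^ q) ^ q - (xt ^ q - (xt - y))) := by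
    rw [step 3, h3, frob, frob, frob, h1]
  have h5 : y ^ q ^ 5 = (((xt ^ q) ^ q) ^ q) ^ q -
      (((xt ^ q) ^ q) ^ q - ((xt ^ q) ^ q - (xt ^ q - (xt - y)))) := by
    rw [step 4, h4, frob, frob, frob, frob, h1]
  have h6 : y ^ q ^ 6 = ((((xt ^ q) ^ q) ^ q) ^ q) ^ q -
      ((((xt ^ q) ^ q) ^ q) ^ q -
        (((xt ^ q) ^ q) ^ q - ((xt ^ q) ^ q - (xt ^ q - (xt - y))))) := by
    rw [step 5, h5, frob, frob, frob, frob, frob, h1]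
  rw [Matrix.det_fin_three]
  simp only [Matrix.cons_val', Matrix.cons_val_zero, Matrix.cons_val_one, Matrix.head_cons,
    Matrix.empty_val', Matrix.cons_val_fin_one, Matrix.cons_val_two, Matrix.tail_cons,
    Matrix.head_fin_const, Matrix.of_apply]
  rw [h4, h6]
  ring
end

section
/- Let K be a field of characteristic p, q = p^h, and let x, y ∈ K satisfy y^q + y = x^{q+1}. Set x̃ = x^{q+1}, A = y + y^{q^3} − x^{q^3+1}, and B = det [[x, x^{q^4}, x^{q^6}], [y, y^{q^4}, y^{q^6}], [1, 1, 1]]. Assume A ≠ 0 and B ≠ 0. Then the invariant t := ((y + y^{q^5} − x^{q^5+1})/A) · ( det [[x, x^{q^2}, x^{q^6}], [y, y^{q^2}, y^{q^6}], [1, 1, 1]] / B )^q satisfies t = ( (x̃^{q^4} − x̃^{q^3} + x̃^{q^2} − x̃^{q} + x̃ − x̃^{q^4−q^3+q^2−q+1}) / (x̃^{q^2} − x̃^{q} + x̃ − x̃^{q^2−q+1}) ) · ( ( (x − x^{q^2})(x̃^{q^2} − x̃^{q^3} + x̃^{q^4} − x̃^{q^5}) + (x^{q^6} − x^{q^2})(x̃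 − x̃^{q}) ) / ( (x^{q^6} − x^{q^4})(x̃ − x̃^{q} + x̃^{q^2} − x̃^{q^3}) + (x − x^{q^4})(x̃^{q^4} − x̃^{q^5}) ) )^q, both right-hand denominators being nonzero. -/
/-- The invariant t of PGU(3,q) expressed as a rational function of x alone. -/
theorem hermitian_invariant_in_x (p h q : ℕ) (hp : p.Prime) (hh : 1 ≤ h) (hq : q = p ^ h)
    (K : Type*) [Field K] [CharP K p]
    (x y : K) (hxy : y ^ q + y = x ^ (q + 1))
    (xt A B t : K) (hxt : xt = x ^ (q + 1))
    (hA : A = y + y ^ q ^ 3 - x ^ (q ^ 3 + 1))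
    (hB : B = Matrix.det !![x, x ^ q ^ 4, x ^ q ^ 6;
                            y, y ^ q ^ 4, y ^ q ^ 6;
                            1, 1, 1])
    (hAne : A ≠ 0) (hBne : B ≠ 0)
    (ht : t = ((y + y ^ q ^ 5 - x ^ (q ^ 5 + 1)) / A) *
      (Matrix.det !![x, x ^ q ^ 2, x ^ q ^ 6;
                     y, y ^ q ^ 2, y ^ q ^ 6;
                     1, 1, 1] / B) ^ q) :
    (xt ^ q ^ 2 - xt ^ q + xt - xt ^ (q ^ 2 - q + 1) ≠ 0) ∧
    ((x ^ q ^ 6 - x ^ q ^ 4) * (xt - xt ^ q + xt ^ q ^ 2 - xt ^ q ^ 3) +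
        (x - x ^ q ^ 4) * (xt ^ q ^ 4 - xt ^ q ^ 5) ≠ 0) ∧
    t = ((xt ^ q ^ 4 - xt ^ q ^ 3 + xt ^ q ^ 2 - xt ^ q + xt -
            xt ^ (q ^ 4 - q ^ 3 + q ^ 2 - q + 1)) /
          (xt ^ q ^ 2 - xt ^ q + xt - xt ^ (q ^ 2 - q + 1))) *
        (((x - x ^ q ^ 2) * (xt ^ q ^ 2 - xt ^ q ^ 3 + xt ^ q ^ 4 - xt ^ q ^ 5) +
            (x ^ q ^ 6 - x ^ q ^ 2) * (xt - xt ^ q)) /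
          ((x ^ q ^ 6 - x ^ q ^ 4) * (xt - xt ^ q + xt ^ q ^ 2 - xt ^ q ^ 3) +
            (x - x ^ q ^ 4) * (xt ^ q ^ 4 - xt ^ q ^ 5))) ^ q := by
  haveI : Fact p.Prime := ⟨hp⟩
  -- Frobenius is additive for exponent q^k
  have frobk : ∀ (n : ℕ) (a b : K), (a + b) ^ q ^ n = a ^ q ^ n + b ^ q ^ n := by
    intro n a b
    subst hq
    rw [← pow_mul p h n]
    exact add_pow_char_pow ..
  -- recursion for powers of y
  have rel : ∀ k : ℕ, y ^ q ^ (k + 1) + y ^ q ^ k = xt ^ q ^ k := by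
    intro k
    have hh' := congrArg (· ^ q ^ k) hxy
    rw [frobk k (y ^ q) y, ← pow_mul, ← hxt] at hh'
    rw [pow_succ']
    exact hh'
  have hy1 : y ^ q = xt - y := by
    have h0 := rel 0
    simp only [pow_zero, pow_one, zero_add] at h0
    linear_combination h0
  have hy2 : y ^ q ^ 2 = xt ^ q - xt + y := by
    have h0 := rel 1
    norm_num at h0
    linear_combination h0 - hy1
  have hy3 : y ^ q ^ 3 = xt ^ q ^ 2 - xt ^ q + xt - y := by
    have h0 := rel 2
    norm_num at h0
    linear_combination h0 - hy2
  have hy4 : y ^ q ^ 4 = xt ^ q ^ 3 - xt ^ q ^ 2 + xt ^ q - xt + y := by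
    have h0 := rel 3
    norm_num at h0
    linear_combination h0 - hy3
  have hy5 : y ^ q ^ 5 = xt ^ q ^ 4 - xt ^ q ^ 3 + xt ^ q ^ 2 - xt ^ q + xt - y := by
    have h0 := rel 4
    norm_num at h0
    linear_combination h0 - hy4
  have hy6 : y ^ q ^ 6 = xt ^ q ^ 5 - xt ^ q ^ 4 + xt ^ q ^ 3 - xt ^ q ^ 2 + xt ^ q - xt + y := by
    have h0 := rel 5
    norm_num at h0
    linear_combination h0 - hy5
  -- natural number exponent arithmetic
  have hq1 : 1 ≤ q := hq ▸ Nat.one_le_pow h p hp.pos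
  have l1 : q ≤ q ^ 2 := Nat.le_self_pow (by norm_num) q
  have l2 : q ^ 3 ≤ q ^ 4 := Nat.pow_le_pow_right hq1 (by norm_num)
  have l3 : q ≤ q ^ 4 - q ^ 3 + q ^ 2 := le_trans l1 (by omega)
  have e31 : (q + 1) * (q ^ 2 - q + 1) = q ^ 3 + 1 := by
    zify [l1]; ring
  have e51 : (q + 1) * (q ^ 4 - q ^ 3 + q ^ 2 - q + 1) = q ^ 5 + 1 := by
    zify [l2, l3]; ring
  have hx31 : xt ^ (q ^ 2 - q + 1) = x ^ (q ^ 3 + 1) := by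
    rw [hxt, ← pow_mul, e31]
  have hx51 : xt ^ (q ^ 4 - q ^ 3 + q ^ 2 - q + 1) = x ^ (q ^ 5 + 1) := by
    rw [hxt, ← pow_mul, e51]
  -- the four identifications
  have eA : xt ^ q ^ 2 - xt ^ q + xt - xt ^ (q ^ 2 - q + 1) = A := by
    rw [hA, hy3, hx31]; ring
  have eN : xt ^ q ^ 4 - xt ^ q ^ 3 + xt ^ q ^ 2 - xt ^ q + xt -
      xt ^ (q ^ 4 - q ^ 3 + q ^ 2 - q + 1) = y + y ^ q ^ 5 - x ^ (q ^ 5 + 1) := by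
    rw [hy5, hx51]; ring
  have eD2 : (x ^ q ^ 6 - x ^ q ^ 4) * (xt - xt ^ q + xt ^ q ^ 2 - xt ^ q ^ 3) +
      (x - x ^ q ^ 4) * (xt ^ q ^ 4 - xt ^ q ^ 5) = B := by
    rw [hB]
    simp [Matrix.det_fin_three, hy4, hy6]
    ring
  have eN2 : (x - x ^ q ^ 2) * (xt ^ q ^ 2 - xt ^ q ^ 3 + xt ^ q ^ 4 - xt ^ q ^ 5) +
      (x ^ q ^ 6 - x ^ q ^ 2) * (xt - xt ^ q) =
      Matrix.det !![x, x ^ q ^ 2, x ^ q ^ 6;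
                    y, y ^ q ^ 2, y ^ q ^ 6;
                    1, 1, 1] := by
    simp [Matrix.det_fin_three, hy2, hy6]
    ring
  refine ⟨by rw [eA]; exact hAne, by rw [eD2]; exact hBne, ?_⟩
  rw [eA, eN, eD2, eN2]
  exact ht
end

section
/- Let K be a field of characteristic p, q = p^h, and let x, y ∈ K satisfy y^q + y = x^{q+1} with x ≠ 0. Then det [[x, x^{q^2}, x^{q^6}], [y, y^{q^2}, y^{q^6}], [1, 1, 1]] = x · ( (y − y^{q^2})·(y^q + y)^{(q^6−1)/(q+1)} + (y^{q^6} − y)·(y^q + y)^{q−1} + y^{q^2} − y^{q^6} ). -/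
/-- The Dickson determinant D₁ on the Hermitian curve expressed via y alone (up to the factor x). -/
theorem hermitian_D1_in_y (p h q : ℕ) (hp : p.Prime) (hh : 1 ≤ h) (hq : q = p ^ h)
    (K : Type*) [Field K] [CharP K p]
    (x y : K) (hxy : y ^ q + y = x ^ (q + 1)) (hx : x ≠ 0) :
    Matrix.det !![x, x ^ q ^ 2, x ^ q ^ 6;
                  y, y ^ q ^ 2, y ^ q ^ 6;
                  1, 1, 1] =
      x * ((y - y ^ q ^ 2) * (y ^ q + y) ^ ((q ^ 6 - 1) / (q + 1)) +
        (y ^ q ^ 6 - y) * (y ^ q + y) ^ (q - 1) + y ^ q ^ 2 - y ^ q ^ 6) := by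
  have hq2 : 2 ≤ q := hq ▸ le_trans hp.two_le (Nat.le_self_pow (by omega) p)
  have h6 : 1 ≤ q ^ 6 := Nat.one_le_pow _ _ (by omega)
  have h2 : 1 ≤ q ^ 2 := Nat.one_le_pow _ _ (by omega)
  have hdvd : (q + 1) ∣ (q ^ 6 - 1) := by
    have hz : ((q : ℤ) + 1) ∣ ((q : ℤ) ^ 6 - 1) :=
      ⟨(q : ℤ) ^ 5 - q ^ 4 + q ^ 3 - q ^ 2 + q - 1, by ring⟩
    have hz' : (((q + 1 : ℕ)) : ℤ) ∣ (((q ^ 6 - 1 : ℕ)) : ℤ) := by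
      push_cast [Nat.cast_sub h6]
      exact hz
    exact_mod_cast hz'
  have hm : (q ^ 6 - 1) / (q + 1) * (q + 1) = q ^ 6 - 1 := Nat.div_mul_cancel hdvd
  have e1 : (y ^ q + y) ^ ((q ^ 6 - 1) / (q + 1)) = x ^ (q ^ 6 - 1) := by
    rw [hxy, ← pow_mul, Nat.mul_div_cancel' hdvd]
  have e2 : (y ^ q + y) ^ (q - 1) = x ^ (q ^ 2 - 1) := by
    rw [hxy, ← pow_mul]
    congr 1
    have := Nat.sq_sub_sq q 1
    simpa [sq, pow_two] using this.symm
  have hx6 : x ^ q ^ 6 = x * x ^ (q ^ 6 - 1) := by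
    rw [← pow_succ']
    congr 1
    omega
  have hx2 : x ^ q ^ 2 = x * x ^ (q ^ 2 - 1) := by
    rw [← pow_succ']
    congr 1
    omega
  rw [e1, e2, hx6, hx2]
  simp [Matrix.det_fin_three]
  ring
end

section
/- Let K be a field of characteristic p, q = p^h, and let x, y ∈ K satisfy y^q + y = x^{q+1} with x ≠ 0. Then det [[x, x^{q^4}, x^{q^6}], [y, y^{q^4}, y^{q^6}], [1, 1, 1]] = x · ( (y − y^{q^4})·(y^q + y)^{(q^6−1)/(q+1)} + (y^{q^6} − y)·(y^q + y)^{(q^4−1)/(q+1)} + y^{q^4} − y^{q^6} ). -/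
/-- The dual Dickson determinant E₁ on the Hermitian curve expressed via y alone (up to the factor x). -/
theorem hermitian_E1_in_y (p h q : ℕ) (hp : p.Prime) (hh : 1 ≤ h) (hq : q = p ^ h)
    (K : Type*) [Field K] [CharP K p]
    (x y : K) (hxy : y ^ q + y = x ^ (q + 1)) (hx : x ≠ 0) :
    Matrix.det !![x, x ^ q ^ 4, x ^ q ^ 6;
                  y, y ^ q ^ 4, y ^ q ^ 6;
                  1, 1, 1] =
      x * ((y - y ^ q ^ 4) * (y ^ q + y) ^ ((q ^ 6 - 1) / (q + 1)) +
        (y ^ q ^ 6 - y) * (y ^ q + y) ^ ((q ^ 4 - 1) / (q + 1)) + y ^ q ^ 4 - y ^ q ^ 6) := by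
  have hq1 : 1 ≤ q := by
    rw [hq]; exact Nat.one_le_pow _ _ hp.pos
  have d2 : (q + 1) ∣ q ^ 2 - 1 := ⟨q - 1, by simpa using Nat.sq_sub_sq q 1⟩
  have d4 : (q + 1) ∣ q ^ 4 - 1 := by
    refine d2.trans ?_
    have := Nat.sub_dvd_pow_sub_pow (q ^ 2) 1 2
    simpa [← pow_mul] using this
  have d6 : (q + 1) ∣ q ^ 6 - 1 := by
    refine d2.trans ?_
    have := Nat.sub_dvd_pow_sub_pow (q ^ 2) 1 3
    simpa [← pow_mul] using this
  have hA : x * (y ^ q + y) ^ ((q ^ 6 - 1) / (q + 1)) = x ^ q ^ 6 := by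
    rw [hxy, ← pow_mul, Nat.mul_div_cancel' d6, ← pow_succ']
    congr 1
    have : 1 ≤ q ^ 6 := Nat.one_le_pow _ _ (by omega)
    omega
  have hB : x * (y ^ q + y) ^ ((q ^ 4 - 1) / (q + 1)) = x ^ q ^ 4 := by
    rw [hxy, ← pow_mul, Nat.mul_div_cancel' d4, ← pow_succ']
    congr 1
    have : 1 ≤ q ^ 4 := Nat.one_le_pow _ _ (by omega)
    omega
  simp [Matrix.det_fin_three]
  linear_combination (y ^ q ^ 4 - y) * hA + (y - y ^ q ^ 6) * hB
end

section
/- Let K be a field of characteristic p, q = p^h, and let x, y ∈ K satisfy y^q + y = x^{q+1} with x ≠ 0. Set A = y + y^{q^3} − x^{q^3+1} and B = det [[x, x^{q^4}, x^{q^6}], [y, y^{q^4}, y^{q^6}], [1, 1, 1]]. Assume A ≠ 0 and B ≠ 0. Then the invariant t := ((y + y^{q^5} − x^{q^5+1})/A) · ( det [[x, x^{q^2}, x^{q^6}], [y, y^{q^2}, y^{q^6}], [1, 1, 1]] / B )^q satisfies t = ( (y + y^{q^5} − (y^q+y)^{q^4−q^3+q^2−q+1}) / (y + y^{q^3} − (y^q+y)^{q^2−q+1})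 ) · ( ( (y − y^{q^2})(y^q+y)^{(q^6−1)/(q+1)} + (y^{q^6} − y)(y^q+y)^{q−1} + y^{q^2} − y^{q^6} ) / ( (y − y^{q^4})(y^q+y)^{(q^6−1)/(q+1)} + (y^{q^6} − y)(y^q+y)^{(q^4−1)/(q+1)} + y^{q^4} − y^{q^6} ) )^q, both right-hand denominators being nonzero. -/
/-- The invariant t of PGU(3,q) expressed as a rational function of y alone. -/
theorem hermitian_invariant_in_y (p h q : ℕ) (hp : p.Prime) (hh : 1 ≤ h) (hq : q = p ^ h)
    (K : Type*) [Field K] [CharP K p]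
    (x y : K) (hxy : y ^ q + y = x ^ (q + 1)) (hx : x ≠ 0)
    (A B t : K)
    (hA : A = y + y ^ q ^ 3 - x ^ (q ^ 3 + 1))
    (hB : B = Matrix.det !![x, x ^ q ^ 4, x ^ q ^ 6;
                            y, y ^ q ^ 4, y ^ q ^ 6;
                            1, 1, 1])
    (hAne : A ≠ 0) (hBne : B ≠ 0)
    (ht : t = ((y + y ^ q ^ 5 - x ^ (q ^ 5 + 1)) / A) *
      (Matrix.det !![x, x ^ q ^ 2, x ^ q ^ 6;
                     y, y ^ q ^ 2, y ^ q ^ 6;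
                     1, 1, 1] / B) ^ q) :
    (y + y ^ q ^ 3 - (y ^ q + y) ^ (q ^ 2 - q + 1) ≠ 0) ∧
    ((y - y ^ q ^ 4) * (y ^ q + y) ^ ((q ^ 6 - 1) / (q + 1)) +
        (y ^ q ^ 6 - y) * (y ^ q + y) ^ ((q ^ 4 - 1) / (q + 1)) + y ^ q ^ 4 - y ^ q ^ 6 ≠ 0) ∧
    t = ((y + y ^ q ^ 5 - (y ^ q + y) ^ (q ^ 4 - q ^ 3 + q ^ 2 - q + 1)) /
          (y + y ^ q ^ 3 - (y ^ q + y) ^ (q ^ 2 - q + 1))) *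
        (((y - y ^ q ^ 2) * (y ^ q + y) ^ ((q ^ 6 - 1) / (q + 1)) +
            (y ^ q ^ 6 - y) * (y ^ q + y) ^ (q - 1) + y ^ q ^ 2 - y ^ q ^ 6) /
          ((y - y ^ q ^ 4) * (y ^ q + y) ^ ((q ^ 6 - 1) / (q + 1)) +
            (y ^ q ^ 6 - y) * (y ^ q + y) ^ ((q ^ 4 - 1) / (q + 1)) +
            y ^ q ^ 4 - y ^ q ^ 6)) ^ q := by
  have hq1 : 1 ≤ q := by subst hq; exact Nat.one_le_pow _ _ hp.pos
  obtain ⟨m, rfl⟩ : ∃ m, q = m + 1 := ⟨q - 1, by omega⟩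
  -- subtraction-free forms of the exponents
  have s2 : (m+1)^2 - (m+1) + 1 = (m+1)*m + 1 := by
    rw [show (m+1)^2 = (m+1)*m + (m+1) from by ring, Nat.add_sub_cancel]
  have s4 : (m+1)^4 - (m+1)^3 + (m+1)^2 - (m+1) + 1
      = (m+1)^3*m + (m+1)*m + 1 := by
    rw [show (m+1)^4 = (m+1)^3*m + (m+1)^3 from by ring, Nat.add_sub_cancel,
        show (m+1)^3*m + (m+1)^2 = ((m+1)^3*m + (m+1)*m) + (m+1) from by ring,
        Nat.add_sub_cancel]
  have s1 : (m+1) - 1 = m := by omega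
  have d6 : ((m+1)^6 - 1) / ((m+1) + 1) = (m+1)^4*m + (m+1)^2*m + m := by
    rw [show (m+1)^6 - 1 = ((m+1)+1) * ((m+1)^4*m + (m+1)^2*m + m) from by
          rw [show (m+1)^6 = ((m+1)+1) * ((m+1)^4*m + (m+1)^2*m + m) + 1 from by ring,
              Nat.add_sub_cancel],
        Nat.mul_div_cancel_left _ (by omega)]
  have d4 : ((m+1)^4 - 1) / ((m+1) + 1) = (m+1)^2*m + m := by
    rw [show (m+1)^4 - 1 = ((m+1)+1) * ((m+1)^2*m + m) from by
          rw [show (m+1)^4 = ((m+1)+1) * ((m+1)^2*m + m) + 1 from by ring,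
              Nat.add_sub_cancel],
        Nat.mul_div_cancel_left _ (by omega)]
  -- powers of y^q + y as powers of x
  have hpow : ∀ a b : ℕ, (m+1+1) * a = b → (y ^ (m+1) + y) ^ a = x ^ b := by
    intro a b hab
    rw [hxy, ← pow_mul, hab]
  have h3 : (y ^ (m+1) + y) ^ ((m+1)^2 - (m+1) + 1) = x ^ ((m+1)^3 + 1) := by
    rw [s2]; exact hpow _ _ (by ring)
  have h5 : (y ^ (m+1) + y) ^ ((m+1)^4 - (m+1)^3 + (m+1)^2 - (m+1) + 1)
      = x ^ ((m+1)^5 + 1) := by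
    rw [s4]; exact hpow _ _ (by ring)
  have h1 : (y ^ (m+1) + y) ^ ((m+1) - 1) = x ^ ((m+1+1)*m) := by
    rw [s1]; exact hpow _ _ rfl
  have h6 : (y ^ (m+1) + y) ^ (((m+1)^6 - 1) / ((m+1) + 1))
      = x ^ ((m+1+1) * ((m+1)^4*m + (m+1)^2*m + m)) := by
    rw [d6]; exact hpow _ _ rfl
  have h4 : (y ^ (m+1) + y) ^ (((m+1)^4 - 1) / ((m+1) + 1))
      = x ^ ((m+1+1) * ((m+1)^2*m + m)) := by
    rw [d4]; exact hpow _ _ rfl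
  -- x^(q^k) = x * x^(exponent used above)
  have exp6 : x ^ ((m+1)^6) = x * x ^ ((m+1+1) * ((m+1)^4*m + (m+1)^2*m + m)) := by
    rw [show (m+1)^6 = (m+1+1) * ((m+1)^4*m + (m+1)^2*m + m) + 1 from by ring, pow_succ]
    ring
  have exp4 : x ^ ((m+1)^4) = x * x ^ ((m+1+1) * ((m+1)^2*m + m)) := by
    rw [show (m+1)^4 = (m+1+1) * ((m+1)^2*m + m) + 1 from by ring, pow_succ]
    ring
  have exp2 : x ^ ((m+1)^2) = x * x ^ ((m+1+1)*m) := by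
    rw [show (m+1)^2 = (m+1+1)*m + 1 from by ring, pow_succ]
    ring
  -- the determinants
  have hBx : B = x * ((y - y ^ (m+1)^4) * x ^ ((m+1+1) * ((m+1)^4*m + (m+1)^2*m + m)) +
      (y ^ (m+1)^6 - y) * x ^ ((m+1+1) * ((m+1)^2*m + m)) + y ^ (m+1)^4 - y ^ (m+1)^6) := by
    rw [hB]
    simp only [Matrix.det_fin_three, Matrix.cons_val', Matrix.cons_val_zero, Matrix.cons_val_one,
      Matrix.head_cons, Matrix.empty_val', Matrix.cons_val_fin_one, Matrix.cons_val_two,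
      Matrix.tail_cons, Matrix.head_fin_const, Matrix.of_apply]
    rw [exp6, exp4]; ring
  have hCx : Matrix.det !![x, x ^ (m+1) ^ 2, x ^ (m+1) ^ 6;
                     y, y ^ (m+1) ^ 2, y ^ (m+1) ^ 6;
                     1, 1, 1]
      = x * ((y - y ^ (m+1)^2) * x ^ ((m+1+1) * ((m+1)^4*m + (m+1)^2*m + m)) +
      (y ^ (m+1)^6 - y) * x ^ ((m+1+1)*m) + y ^ (m+1)^2 - y ^ (m+1)^6) := by
    simp only [Matrix.det_fin_three, Matrix.cons_val', Matrix.cons_val_zero, Matrix.cons_val_one,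
      Matrix.head_cons, Matrix.empty_val', Matrix.cons_val_fin_one, Matrix.cons_val_two,
      Matrix.tail_cons, Matrix.head_fin_const, Matrix.of_apply]
    rw [exp6, exp2]; ring
  have hDne : (y - y ^ (m+1)^4) * x ^ ((m+1+1) * ((m+1)^4*m + (m+1)^2*m + m)) +
      (y ^ (m+1)^6 - y) * x ^ ((m+1+1) * ((m+1)^2*m + m)) + y ^ (m+1)^4 - y ^ (m+1)^6 ≠ 0 := by
    intro h0
    exact hBne (by rw [hBx, h0, mul_zero])
  refine ⟨?_, ?_, ?_⟩
  · rw [h3, ← hA]; exact hAne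
  · rw [h6, h4]; exact hDne
  · rw [ht, hCx, hBx, mul_div_mul_left _ _ hx, h5, h3, h6, h4, h1, ← hA]
end

section
/- Let K be a field of characteristic p, q = p^h, and let x, y ∈ K satisfy y^q + y = x^{q+1}. Define D_1 = det [[x, x^{q^2}, x^{q^6}], [y, y^{q^2}, y^{q^6}], [1, 1, 1]], D_2 = det [[x, x^{q^2}, x^{q^4}], [y, y^{q^2}, y^{q^4}], [1, 1, 1]], and E_1 = det [[x, x^{q^4}, x^{q^6}], [y, y^{q^4}, y^{q^6}], [1, 1, 1]]. Assume y + y^{q^3} − x^{q^3+1} ≠ 0, D_2 ≠ 0, and E_1 ≠ 0. Then the invariant t := ((y + y^{q^5} − x^{q^5+1})/(y + y^{q^3} − x^{q^3+1})) · (D_1/E_1)^q satisfies t^q = D_1^{q^2+1} / (E_1^{q^2} · D_2). -/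
/-- Key polynomial identity: given the tower of Hermitian relations
b_{i+1} = a_i a_{i+1} - b_i, the Hermitian form B(1,6) times the determinant
D(0,2,4) equals B(1,4) times D(0,2,6). -/
theorem hermitian_key_identity {K : Type*} [CommRing K]
    (a0 a1 a2 a3 a4 a5 a6 b0 b1 b2 b3 b4 b5 b6 : K)
    (h1 : b1 = a0 * a1 - b0) (h2 : b2 = a1 * a2 - b1) (h3 : b3 = a2 * a3 - b2)
    (h4 : b4 = a3 * a4 - b3) (h5 : b5 = a4 * a5 - b4) (h6 : b6 = a5 * a6 - b5) :
    (b1 + b6 - a1 * a6) *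
      (a0 * (b2 - b4) - a2 * (b0 - b4) + a4 * (b0 - b2)) =
    (b1 + b4 - a1 * a4) *
      (a0 * (b2 - b6) - a2 * (b0 - b6) + a6 * (b0 - b2)) := by
  subst h1 h2 h3 h4 h5 h6
  ring

/-- The PGL(3,q²)-invariant u = D₁^(q²+1)/(E₁^(q²)·D₂) equals t^q, where t is
the invariant of PGU(3,q) on the Hermitian curve. -/
theorem hermitian_u_eq_t_pow_q (p h q : ℕ) (hp : p.Prime) (hh : 1 ≤ h) (hq : q = p ^ h)
    (K : Type*) [Field K] [CharP K p]
    (x y : K) (hxy : y ^ q + y = x ^ (q + 1))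
    (D1 D2 E1 t : K)
    (hD1 : D1 = Matrix.det !![x, x ^ q ^ 2, x ^ q ^ 6;
                              y, y ^ q ^ 2, y ^ q ^ 6;
                              1, 1, 1])
    (hD2 : D2 = Matrix.det !![x, x ^ q ^ 2, x ^ q ^ 4;
                              y, y ^ q ^ 2, y ^ q ^ 4;
                              1, 1, 1])
    (hE1 : E1 = Matrix.det !![x, x ^ q ^ 4, x ^ q ^ 6;
                              y, y ^ q ^ 4, y ^ q ^ 6;
                              1, 1, 1])
    (hden : y + y ^ q ^ 3 - x ^ (q ^ 3 + 1) ≠ 0) (hD2ne : D2 ≠ 0) (hE1ne : E1 ≠ 0)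
    (ht : t = ((y + y ^ q ^ 5 - x ^ (q ^ 5 + 1)) / (y + y ^ q ^ 3 - x ^ (q ^ 3 + 1))) *
      (D1 / E1) ^ q) :
    t ^ q = D1 ^ (q ^ 2 + 1) / (E1 ^ q ^ 2 * D2) := by
  haveI := Fact.mk hp
  -- Frobenius is additive
  have frob : ∀ a b : K, (a + b) ^ q = a ^ q + b ^ q := by
    intro a b; rw [hq]; exact add_pow_char_pow a b p h
  have frobsub : ∀ a b : K, (a - b) ^ q = a ^ q - b ^ q := by
    intro a b; rw [hq]; exact sub_pow_char_pow a b h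
  have pp : ∀ (z : K) (i : ℕ), (z ^ q ^ i) ^ q = z ^ q ^ (i + 1) := by
    intro z i; rw [← pow_mul, ← pow_succ]
  have px : ∀ i : ℕ, (x ^ (q ^ i + 1)) ^ q = x ^ q ^ (i + 1) * x ^ q := by
    intro i
    rw [← pow_mul, add_mul, one_mul, pow_add, ← pow_succ]
  -- the tower of Hermitian relations
  have rel : ∀ i : ℕ, y ^ q ^ (i + 1) + y ^ q ^ i = x ^ q ^ i * x ^ q ^ (i + 1) := by
    intro i
    induction i with
    | zero =>
      simpa [pow_succ, mul_comm] using hxy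
    | succ n ih =>
      have := congrArg (fun z : K => z ^ q) ih
      simp only [frob, mul_pow, pp] at this
      exact this
  have r : ∀ i : ℕ, y ^ q ^ (i + 1) = x ^ q ^ i * x ^ q ^ (i + 1) - y ^ q ^ i :=
    fun i => eq_sub_of_add_eq (rel i)
  have r1 : y ^ q = x * x ^ q - y := by simpa using r 0
  have r2 : y ^ q ^ 2 = x ^ q * x ^ q ^ 2 - y ^ q := by simpa using r 1
  have r3 : y ^ q ^ 3 = x ^ q ^ 2 * x ^ q ^ 3 - y ^ q ^ 2 := by simpa using r 2
  have r4 : y ^ q ^ 4 = x ^ q ^ 3 * x ^ q ^ 4 - y ^ q ^ 3 := by simpa using r 3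
  have r5 : y ^ q ^ 5 = x ^ q ^ 4 * x ^ q ^ 5 - y ^ q ^ 4 := by simpa using r 4
  have r6 : y ^ q ^ 6 = x ^ q ^ 5 * x ^ q ^ 6 - y ^ q ^ 5 := by simpa using r 5
  -- Frobenius images of numerator and denominator
  have hN : (y + y ^ q ^ 5 - x ^ (q ^ 5 + 1)) ^ q
      = (y ^ q + y ^ q ^ 6) - x ^ q ^ 6 * x ^ q := by
    rw [frobsub, frob, pp, px]
  have hDd : (y + y ^ q ^ 3 - x ^ (q ^ 3 + 1)) ^ q
      = (y ^ q + y ^ q ^ 4) - x ^ q ^ 4 * x ^ q := by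
    rw [frobsub, frob, pp, px]
  -- the key identity relating D1 and D2
  have hk : (y + y ^ q ^ 5 - x ^ (q ^ 5 + 1)) ^ q * D2
      = (y + y ^ q ^ 3 - x ^ (q ^ 3 + 1)) ^ q * D1 := by
    rw [hN, hDd, hD1, hD2]
    simp only [Matrix.det_fin_three, Matrix.of_apply, Matrix.cons_val', Matrix.cons_val_zero,
      Matrix.cons_val_one, Matrix.cons_val_two, Matrix.head_cons, Matrix.tail_cons,
      Matrix.empty_val', Matrix.cons_val_fin_one, Matrix.head_fin_const]
    linear_combination hermitian_key_identity x (x ^ q) (x ^ q ^ 2) (x ^ q ^ 3) (x ^ q ^ 4)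
      (x ^ q ^ 5) (x ^ q ^ 6) y (y ^ q) (y ^ q ^ 2) (y ^ q ^ 3) (y ^ q ^ 4) (y ^ q ^ 5)
      (y ^ q ^ 6) r1 r2 r3 r4 r5 r6
  have hDdq_ne : (y + y ^ q ^ 3 - x ^ (q ^ 3 + 1)) ^ q ≠ 0 := pow_ne_zero _ hden
  have hE1q_ne : (E1 : K) ^ q ^ 2 ≠ 0 := pow_ne_zero _ hE1ne
  rw [ht, mul_pow, ← pow_mul, div_pow, div_pow, ← pow_two, div_mul_div_comm,
    div_eq_div_iff (mul_ne_zero hDdq_ne hE1q_ne) (mul_ne_zero hE1q_ne hD2ne)]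
  linear_combination (D1 ^ q ^ 2 * E1 ^ q ^ 2) * hk
end

section
/- Let F be a field of characteristic p and q = p^h. In the polynomial ring F[X, Y, Z], the Dickson determinant D_2 = det [[X, X^{q^2}, X^{q^4}], [Y, Y^{q^2}, Y^{q^4}], [Z, Z^{q^2}, Z^{q^4}]] divides the Dickson determinant D_1 = det [[X, X^{q^2}, X^{q^6}], [Y, Y^{q^2}, Y^{q^6}], [Z, Z^{q^2}, Z^{q^6}]]; moreover the quotient polynomial D_1/D_2 has total degree q^6 − q^4. -/
/-- D₂ divides D₁ in F[X,Y,Z], and the quotient (the Borges/DGZ polynomial) has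
total degree q⁶ − q⁴. -/
theorem borges_polynomial (p h q : ℕ) (hp : p.Prime) (hh : 1 ≤ h) (hq : q = p ^ h)
    (F : Type*) [Field F] [CharP F p]
    (X Y Z D1 D2 : MvPolynomial (Fin 3) F)
    (hX : X = MvPolynomial.X 0) (hY : Y = MvPolynomial.X 1) (hZ : Z = MvPolynomial.X 2)
    (hD1 : D1 = Matrix.det !![X, X ^ q ^ 2, X ^ q ^ 6;
                              Y, Y ^ q ^ 2, Y ^ q ^ 6;
                              Z, Z ^ q ^ 2, Z ^ q ^ 6])
    (hD2 : D2 = Matrix.det !![X, X ^ q ^ 2, X ^ q ^ 4;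
                              Y, Y ^ q ^ 2, Y ^ q ^ 4;
                              Z, Z ^ q ^ 2, Z ^ q ^ 4]) :
    D2 ∣ D1 ∧ ∃ Q : MvPolynomial (Fin 3) F,
      D1 = D2 * Q ∧ Q.totalDegree = q ^ 6 - q ^ 4 := by
  haveI : Fact p.Prime := ⟨hp⟩
  -- basic numerical facts
  have hq2' : 2 ≤ q := by
    subst hq
    calc 2 ≤ p := hp.two_le
    _ ≤ p ^ h := Nat.le_self_pow (by omega) p
  have hq0 : 0 < q := by omega
  have hQ1 : 1 ≤ q ^ 2 := Nat.one_le_pow _ _ hq0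
  have hQ2 : 2 ≤ q ^ 2 := le_trans hq2' (Nat.le_self_pow (by omega) q)
  have hQ42 : q ^ 2 ≤ q ^ 4 := Nat.pow_le_pow_right hq0 (by omega)
  have hQ41 : 1 ≤ q ^ 4 := le_trans hQ1 hQ42
  have e24 : q ^ 2 * q ^ 2 = q ^ 4 := by rw [← pow_add]
  have e46 : q ^ 4 * q ^ 2 = q ^ 6 := by rw [← pow_add]
  have nat1 : (q ^ 2 - 1) * q ^ 2 = q ^ 4 - q ^ 2 := by
    rw [Nat.sub_mul, one_mul, ← pow_add]
  have nat2 : (q ^ 4 - q ^ 2) * q ^ 2 = q ^ 6 - q ^ 4 := by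
    rw [Nat.sub_mul, ← pow_add, ← pow_add]
  have nat3 : (q ^ 2 - 1) * q ^ 4 = q ^ 6 - q ^ 4 := by
    rw [Nat.sub_mul, one_mul, ← pow_add]
  -- Frobenius
  have hqq : q ^ 2 = p ^ (h * 2) := by rw [hq, ← pow_mul]
  have frobS : ∀ A B : MvPolynomial (Fin 3) F,
      (A - B) ^ q ^ 2 = A ^ q ^ 2 - B ^ q ^ 2 := by
    intro A B; rw [hqq]; exact sub_pow_char_pow A B (h * 2)
  have frobA : ∀ A B : MvPolynomial (Fin 3) F,
      (A + B) ^ q ^ 2 = A ^ q ^ 2 + B ^ q ^ 2 := by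
    intro A B; rw [hqq]; exact add_pow_char_pow A B p (h * 2)
  have pow_cancel : ∀ (A : MvPolynomial (Fin 3) F) (m n : ℕ), n ≤ m →
      A ^ (m - n) * A ^ n = A ^ m := by
    intro A m n hnm; rw [← pow_add, Nat.sub_add_cancel hnm]
  -- the auxiliary polynomials
  set w : MvPolynomial (Fin 3) F := Y ^ q ^ 2 - X ^ (q ^ 2 - 1) * Y with hw
  set a2 : MvPolynomial (Fin 3) F := X ^ (q ^ 4 - q ^ 2) + w ^ (q ^ 2 - 1) with ha2
  set b2 : MvPolynomial (Fin 3) F := w ^ (q ^ 2 - 1) * X ^ (q ^ 2 - 1) with hb2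
  set u : MvPolynomial (Fin 3) F := Z ^ q ^ 4 - a2 * Z ^ q ^ 2 + b2 * Z with hu
  set c2 : MvPolynomial (Fin 3) F := a2 ^ q ^ 2 + u ^ (q ^ 2 - 1) with hc2
  set c1 : MvPolynomial (Fin 3) F := b2 ^ q ^ 2 + u ^ (q ^ 2 - 1) * a2 with hc1
  set c0 : MvPolynomial (Fin 3) F := u ^ (q ^ 2 - 1) * b2 with hc0
  -- the key reduction lemma
  have key : ∀ v : MvPolynomial (Fin 3) F,
      (v ^ q ^ 4 - a2 * v ^ q ^ 2 + b2 * v) ^ q ^ 2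
        = u ^ (q ^ 2 - 1) * (v ^ q ^ 4 - a2 * v ^ q ^ 2 + b2 * v) →
      v ^ q ^ 6 = c2 * v ^ q ^ 4 - c1 * v ^ q ^ 2 + c0 * v := by
    intro v hv
    have expand : (v ^ q ^ 4 - a2 * v ^ q ^ 2 + b2 * v) ^ q ^ 2
        = v ^ q ^ 6 - a2 ^ q ^ 2 * v ^ q ^ 4 + b2 ^ q ^ 2 * v ^ q ^ 2 := by
      rw [frobA, frobS, mul_pow, mul_pow, ← pow_mul, ← pow_mul, e46, e24]
    rw [expand] at hv
    rw [hc2, hc1, hc0]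
    linear_combination hv
  -- the three vanishing facts
  have hx2 : X ^ (q ^ 2 - 1) * X = X ^ q ^ 2 := by
    have := pow_cancel X (q ^ 2) 1 hQ1; rwa [pow_one] at this
  have hx1 : X ^ (q ^ 4 - q ^ 2) * X ^ q ^ 2 = X ^ q ^ 4 := pow_cancel X _ _ hQ42
  have gX : X ^ q ^ 4 - a2 * X ^ q ^ 2 + b2 * X = 0 := by
    rw [ha2, hb2]
    linear_combination -hx1 + w ^ (q ^ 2 - 1) * hx2
  have hwq : w ^ q ^ 2 = Y ^ q ^ 4 - X ^ (q ^ 4 - q ^ 2) * Y ^ q ^ 2 := by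
    rw [hw, frobS, mul_pow, ← pow_mul, ← pow_mul, e24, nat1]
  have hww : w ^ (q ^ 2 - 1) * w = w ^ q ^ 2 := by
    have := pow_cancel w (q ^ 2) 1 hQ1; rwa [pow_one] at this
  have gY : Y ^ q ^ 4 - a2 * Y ^ q ^ 2 + b2 * Y = 0 := by
    rw [ha2, hb2]
    linear_combination -hwq - hww + w ^ (q ^ 2 - 1) * hw
  have hQ2ne : q ^ 2 ≠ 0 := by omega
  have hvX : (X ^ q ^ 4 - a2 * X ^ q ^ 2 + b2 * X) ^ q ^ 2
      = u ^ (q ^ 2 - 1) * (X ^ q ^ 4 - a2 * X ^ q ^ 2 + b2 * X) := by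
    rw [gX, mul_zero, zero_pow hQ2ne]
  have hvY : (Y ^ q ^ 4 - a2 * Y ^ q ^ 2 + b2 * Y) ^ q ^ 2
      = u ^ (q ^ 2 - 1) * (Y ^ q ^ 4 - a2 * Y ^ q ^ 2 + b2 * Y) := by
    rw [gY, mul_zero, zero_pow hQ2ne]
  have hvZ : (Z ^ q ^ 4 - a2 * Z ^ q ^ 2 + b2 * Z) ^ q ^ 2
      = u ^ (q ^ 2 - 1) * (Z ^ q ^ 4 - a2 * Z ^ q ^ 2 + b2 * Z) := by
    rw [← hu]
    have := pow_cancel u (q ^ 2) 1 hQ1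
    rw [pow_one] at this
    rw [← this]
  have eX := key X hvX
  have eY := key Y hvY
  have eZ := key Z hvZ
  -- the main factorization
  have hmain : D1 = D2 * c2 := by
    rw [hD1, hD2]
    simp only [Matrix.det_fin_three, Matrix.cons_val_one, Matrix.head_cons, Matrix.cons_val_two,
      Matrix.tail_cons, Matrix.cons_val_zero, Matrix.head_fin_const, Matrix.cons_val',
      Matrix.empty_val', Matrix.cons_val_fin_one, Matrix.of_apply]
    rw [eX, eY, eZ]
    ring
  -- degree bounds from above
  have hdw : w.totalDegree ≤ q ^ 2 := by
    rw [hw]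
    refine le_trans (MvPolynomial.totalDegree_sub _ _) (max_le ?_ ?_)
    · rw [hY, MvPolynomial.totalDegree_X_pow]
    · refine le_trans (MvPolynomial.totalDegree_mul _ _) ?_
      have t1 : (X ^ (q ^ 2 - 1)).totalDegree = q ^ 2 - 1 := by
        rw [hX, MvPolynomial.totalDegree_X_pow]
      have t2 : Y.totalDegree = 1 := by rw [hY]; exact MvPolynomial.totalDegree_X _
      rw [t1, t2, Nat.sub_add_cancel hQ1]
  have hda2 : a2.totalDegree ≤ q ^ 4 - q ^ 2 := by
    rw [ha2]
    refine le_trans (MvPolynomial.totalDegree_add _ _) (max_le ?_ ?_)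
    · rw [hX, MvPolynomial.totalDegree_X_pow]
    · refine le_trans (MvPolynomial.totalDegree_pow _ _) ?_
      calc (q ^ 2 - 1) * w.totalDegree ≤ (q ^ 2 - 1) * q ^ 2 :=
            Nat.mul_le_mul_left _ hdw
        _ = q ^ 4 - q ^ 2 := nat1
  have hdb2 : b2.totalDegree ≤ (q ^ 4 - q ^ 2) + (q ^ 2 - 1) := by
    rw [hb2]
    refine le_trans (MvPolynomial.totalDegree_mul _ _) (add_le_add ?_ ?_)
    · refine le_trans (MvPolynomial.totalDegree_pow _ _) ?_
      calc (q ^ 2 - 1) * w.totalDegree ≤ (q ^ 2 - 1) * q ^ 2 :=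
            Nat.mul_le_mul_left _ hdw
        _ = q ^ 4 - q ^ 2 := nat1
    · rw [hX, MvPolynomial.totalDegree_X_pow]
  have hdu : u.totalDegree ≤ q ^ 4 := by
    rw [hu]
    refine le_trans (MvPolynomial.totalDegree_add _ _)
      (max_le (le_trans (MvPolynomial.totalDegree_sub _ _) (max_le ?_ ?_)) ?_)
    · rw [hZ, MvPolynomial.totalDegree_X_pow]
    · refine le_trans (MvPolynomial.totalDegree_mul _ _) ?_
      have t3 : (Z ^ q ^ 2).totalDegree = q ^ 2 := by rw [hZ, MvPolynomial.totalDegree_X_pow]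
      rw [t3]
      calc a2.totalDegree + q ^ 2 ≤ (q ^ 4 - q ^ 2) + q ^ 2 := Nat.add_le_add_right hda2 _
        _ = q ^ 4 := Nat.sub_add_cancel hQ42
    · refine le_trans (MvPolynomial.totalDegree_mul _ _) ?_
      have t4 : Z.totalDegree = 1 := by rw [hZ]; exact MvPolynomial.totalDegree_X _
      rw [t4]
      calc b2.totalDegree + 1 ≤ ((q ^ 4 - q ^ 2) + (q ^ 2 - 1)) + 1 :=
            Nat.add_le_add_right hdb2 _
        _ = (q ^ 4 - q ^ 2) + q ^ 2 := by rw [add_assoc, Nat.sub_add_cancel hQ1]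
        _ = q ^ 4 := Nat.sub_add_cancel hQ42
  have hdc2 : c2.totalDegree ≤ q ^ 6 - q ^ 4 := by
    rw [hc2]
    refine le_trans (MvPolynomial.totalDegree_add _ _) (max_le ?_ ?_)
    · refine le_trans (MvPolynomial.totalDegree_pow _ _) ?_
      calc q ^ 2 * a2.totalDegree ≤ q ^ 2 * (q ^ 4 - q ^ 2) := Nat.mul_le_mul_left _ hda2
        _ = q ^ 6 - q ^ 4 := by rw [mul_comm]; exact nat2
    · refine le_trans (MvPolynomial.totalDegree_pow _ _) ?_
      calc (q ^ 2 - 1) * u.totalDegree ≤ (q ^ 2 - 1) * q ^ 4 := Nat.mul_le_mul_left _ hdu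
        _ = q ^ 6 - q ^ 4 := nat3
  -- lower bound : the coefficient of X^(q^6-q^4) in c2 is 1
  have hYp : Y ^ (q ^ 2 - 1) * Y = Y ^ q ^ 2 := by
    have := pow_cancel Y (q ^ 2) 1 hQ1; rwa [pow_one] at this
  have hwY : w = (Y ^ (q ^ 2 - 1) - X ^ (q ^ 2 - 1)) * Y := by
    rw [hw]; linear_combination -hYp
  have hk1 : 1 ≤ (q ^ 2 - 1) * q ^ 2 := by
    have h1' : 1 ≤ q ^ 2 - 1 := by omega
    exact le_trans h1' (Nat.le_mul_of_pos_right _ (by omega))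
  have hwfac : ∃ s : MvPolynomial (Fin 3) F, (w ^ (q ^ 2 - 1)) ^ q ^ 2 = Y * s := by
    refine ⟨Y ^ ((q ^ 2 - 1) * q ^ 2 - 1) * (Y ^ (q ^ 2 - 1) - X ^ (q ^ 2 - 1)) ^
      ((q ^ 2 - 1) * q ^ 2), ?_⟩
    rw [← pow_mul, hwY, mul_pow]
    have hyy : Y * Y ^ ((q ^ 2 - 1) * q ^ 2 - 1) = Y ^ ((q ^ 2 - 1) * q ^ 2) := by
      rw [← pow_succ', Nat.sub_add_cancel hk1]
    linear_combination -((Y ^ (q ^ 2 - 1) - X ^ (q ^ 2 - 1)) ^ ((q ^ 2 - 1) * q ^ 2)) * hyy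
  have hz1 : Z ^ (q ^ 4 - 1) * Z = Z ^ q ^ 4 := by
    have := pow_cancel Z (q ^ 4) 1 hQ41; rwa [pow_one] at this
  have hz2 : Z ^ (q ^ 2 - 1) * Z = Z ^ q ^ 2 := by
    have := pow_cancel Z (q ^ 2) 1 hQ1; rwa [pow_one] at this
  have htZ : u = (Z ^ (q ^ 4 - 1) - a2 * Z ^ (q ^ 2 - 1) + b2) * Z := by
    rw [hu]; linear_combination -hz1 + a2 * hz2
  have hufac : ∃ s : MvPolynomial (Fin 3) F, u ^ (q ^ 2 - 1) = Z * s := by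
    refine ⟨Z ^ (q ^ 2 - 1 - 1) * (Z ^ (q ^ 4 - 1) - a2 * Z ^ (q ^ 2 - 1) + b2) ^
      (q ^ 2 - 1), ?_⟩
    rw [htZ, mul_pow]
    have hzz : Z * Z ^ (q ^ 2 - 1 - 1) = Z ^ (q ^ 2 - 1) := by
      rw [← pow_succ', Nat.sub_add_cancel (by omega)]
    linear_combination -((Z ^ (q ^ 4 - 1) - a2 * Z ^ (q ^ 2 - 1) + b2) ^ (q ^ 2 - 1)) * hzz
  classical
  have hmZero : ∀ s : MvPolynomial (Fin 3) F, ∀ i : Fin 3, i ≠ 0 →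
      MvPolynomial.coeff (Finsupp.single (0 : Fin 3) (q ^ 6 - q ^ 4))
        (MvPolynomial.X i * s) = 0 := by
    intro s i hi
    rw [MvPolynomial.coeff_X_mul']
    rw [if_neg]
    simp [Finsupp.single_apply, hi.symm]
  obtain ⟨s1, hs1⟩ := hwfac
  obtain ⟨s2, hs2⟩ := hufac
  have hsplit : a2 ^ q ^ 2 = (X ^ (q ^ 4 - q ^ 2)) ^ q ^ 2 + (w ^ (q ^ 2 - 1)) ^ q ^ 2 := by
    rw [ha2, hqq]; exact add_pow_char_pow _ _ p (h * 2)
  have hXpow : (X ^ (q ^ 4 - q ^ 2)) ^ q ^ 2 = MvPolynomial.X 0 ^ (q ^ 6 - q ^ 4) := by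
    rw [← pow_mul, nat2, hX]
  have hcoeff : MvPolynomial.coeff (Finsupp.single (0 : Fin 3) (q ^ 6 - q ^ 4)) c2 = 1 := by
    rw [hc2, hsplit, MvPolynomial.coeff_add, MvPolynomial.coeff_add, hXpow,
      MvPolynomial.coeff_X_pow, if_pos rfl, hs1, hs2, hY, hZ,
      hmZero s1 1 (by decide), hmZero s2 2 (by decide)]
    ring
  have hge : q ^ 6 - q ^ 4 ≤ c2.totalDegree := by
    have hsupp : Finsupp.single (0 : Fin 3) (q ^ 6 - q ^ 4) ∈ c2.support :=
      MvPolynomial.mem_support_iff.mpr (by rw [hcoeff]; exact one_ne_zero)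
    have := MvPolynomial.le_totalDegree hsupp
    rwa [Finsupp.sum_single_index rfl] at this
  exact ⟨⟨c2, hmain⟩, c2, hmain, le_antisymm hdc2 hge⟩
end

section
/- Let F be a field of characteristic p and q = p^h. In the polynomial ring F[X, Y, Z], the Dickson determinant D_2 = det [[X, X^{q^2}, X^{q^4}], [Y, Y^{q^2}, Y^{q^4}], [Z, Z^{q^2}, Z^{q^4}]] divides the dual Dickson determinant E_1 = det [[X, X^{q^4}, X^{q^6}], [Y, Y^{q^4}, Y^{q^6}], [Z, Z^{q^4}, Z^{q^6}]]; moreover the quotient polynomial E_1/D_2 has total degree q^6 − q^2. -/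
/-!
Put `Q = q ^ 2`, so that `u ↦ u ^ Q` is additive. The Dickson invariants `c₀, c₁` of `x, y` are
polynomials for which `L(T) = T ^ Q² - c₁ T ^ Q + c₀ T` vanishes at `T = x` and `T = y`; hence so
does `L(T) ^ Q = T ^ Q³ - c₁ ^ Q T ^ Q² + c₀ ^ Q T ^ Q`. Column operations with these relations
reduce both determinants to their last row: with `M = x y ^ Q - x ^ Q y`,
`D₂ = M L(z)` and `E₁ = M (c₁ L(z) ^ Q + c₀ ^ Q L(z)) = D₂ (c₀ ^ Q + c₁ L(z) ^ (Q - 1))`.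
A determinant `det (X i ^ e j)` with distinct exponents is a signed sum of distinct monomials of
degree `∑ e`, so `E₁` and `D₂` are nonzero of degrees `1 + Q² + Q³` and `1 + Q + Q²`, and the
quotient has degree `Q³ - Q` in the domain `F[X, Y, Z]`.
-/

open MvPolynomial

section ColumnRelations

variable {R : Type*} [CommRing R]

theorem det_fin_three_of_col_two_eq {x x₁ x₂ y y₁ y₂ z z₁ z₂ a b : R}
    (hx : x₂ = a * x₁ - b * x) (hy : y₂ = a * y₁ - b * y) :
    !![x, x₁, x₂; y, y₁, y₂; z, z₁, z₂].det = (x * y₁ - x₁ * y) * (z₂ - a * z₁ + b * z) := by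
  subst hx hy
  simp only [Matrix.det_fin_three, Fin.isValue, Matrix.of_apply, Matrix.cons_val',
    Matrix.cons_val_zero, Matrix.cons_val_fin_one, Matrix.cons_val_one, Matrix.cons_val]
  ring

theorem det_fin_three_of_col_recurrence {x x₁ x₂ x₃ y y₁ y₂ y₃ z z₁ z₂ z₃ a b a' b' : R}
    (hx₂ : x₂ = a * x₁ - b * x) (hy₂ : y₂ = a * y₁ - b * y)
    (hx₃ : x₃ = a' * x₂ - b' * x₁) (hy₃ : y₃ = a' * y₂ - b' * y₁) :
    !![x, x₂, x₃; y, y₂, y₃; z, z₂, z₃].det =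
      (x * y₁ - x₁ * y) * (a * (z₃ - a' * z₂ + b' * z₁) + b' * (z₂ - a * z₁ + b * z)) := by
  subst hx₃ hy₃ hx₂ hy₂
  simp only [Matrix.det_fin_three, Fin.isValue, Matrix.of_apply, Matrix.cons_val',
    Matrix.cons_val_zero, Matrix.cons_val_fin_one, Matrix.cons_val_one, Matrix.cons_val]
  ring

end ColumnRelations

section Dickson

variable {R : Type*} [CommRing R] {Q : ℕ}

/-- `dicksonCoeff₀ Q x y = (x * y ^ Q - x ^ Q * y) ^ (Q - 1)` and
`dicksonCoeff₁ Q x y = (x * y ^ Q ^ 2 - x ^ Q ^ 2 * y) / (x * y ^ Q - x ^ Q * y)` are the Dickson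
invariants of `x, y`, written here without division. -/
def dicksonCoeff₁ (Q : ℕ) (x y : R) : R :=
  x ^ ((Q - 1) * Q) + (y ^ Q - x ^ (Q - 1) * y) ^ (Q - 1)

def dicksonCoeff₀ (Q : ℕ) (x y : R) : R :=
  x ^ (Q - 1) * (y ^ Q - x ^ (Q - 1) * y) ^ (Q - 1)

def subspacePoly (Q : ℕ) (x y z : R) : R :=
  z ^ Q ^ 2 - dicksonCoeff₁ Q x y * z ^ Q + dicksonCoeff₀ Q x y * z

def dualBorges (Q : ℕ) (x y z : R) : R :=
  dicksonCoeff₀ Q x y ^ Q + dicksonCoeff₁ Q x y * subspacePoly Q x y z ^ (Q - 1)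

theorem pow_sq_eq_dicksonCoeff_left (hQ : Q ≠ 0) (x y : R) :
    x ^ Q ^ 2 = dicksonCoeff₁ Q x y * x ^ Q - dicksonCoeff₀ Q x y * x := by
  obtain ⟨n, rfl⟩ : ∃ n, Q = n + 1 := ⟨Q - 1, by omega⟩
  simp only [dicksonCoeff₁, dicksonCoeff₀, Nat.add_sub_cancel]
  ring

theorem pow_sq_eq_dicksonCoeff_right (hQ : Q ≠ 0) (hfrob : ∀ a b : R, (a - b) ^ Q = a ^ Q - b ^ Q)
    (x y : R) : y ^ Q ^ 2 = dicksonCoeff₁ Q x y * y ^ Q - dicksonCoeff₀ Q x y * y := by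
  have hf : (y ^ Q - x ^ (Q - 1) * y) ^ Q = y ^ Q ^ 2 - x ^ ((Q - 1) * Q) * y ^ Q := by
    rw [hfrob, mul_pow, ← pow_mul, ← pow_mul, sq]
  obtain ⟨n, rfl⟩ : ∃ n, Q = n + 1 := ⟨Q - 1, by omega⟩
  simp only [dicksonCoeff₁, dicksonCoeff₀, Nat.add_sub_cancel] at hf ⊢
  linear_combination -hf

end Dickson

section Moore

variable {R : Type*} [CommRing R] {Q : ℕ}

theorem det_moore_eq (hQ : Q ≠ 0) (hfrob : ∀ a b : R, (a - b) ^ Q = a ^ Q - b ^ Q) (x y z : R) :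
    !![x, x ^ Q, x ^ Q ^ 2; y, y ^ Q, y ^ Q ^ 2; z, z ^ Q, z ^ Q ^ 2].det =
      (x * y ^ Q - x ^ Q * y) * subspacePoly Q x y z :=
  det_fin_three_of_col_two_eq (pow_sq_eq_dicksonCoeff_left hQ x y)
    (pow_sq_eq_dicksonCoeff_right hQ hfrob x y)

theorem pow_cube_eq_of_pow_sq_eq (hfrob : ∀ a b : R, (a - b) ^ Q = a ^ Q - b ^ Q) {w a b : R}
    (h : w ^ Q ^ 2 = a * w ^ Q - b * w) : w ^ Q ^ 3 = a ^ Q * w ^ Q ^ 2 - b ^ Q * w ^ Q := by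
  conv_lhs => rw [pow_succ, pow_mul, h]
  rw [hfrob, mul_pow, mul_pow, ← pow_mul, ← sq]

theorem subspacePoly_pow (hfrob : ∀ a b : R, (a - b) ^ Q = a ^ Q - b ^ Q) (x y z : R) :
    subspacePoly Q x y z ^ Q =
      z ^ Q ^ 3 - dicksonCoeff₁ Q x y ^ Q * z ^ Q ^ 2 + dicksonCoeff₀ Q x y ^ Q * z ^ Q := by
  rw [subspacePoly, sub_add, hfrob, hfrob, mul_pow, mul_pow, ← pow_mul, ← pow_mul, ← pow_succ,
    ← sq]
  ring

theorem det_dual_moore_eq (hQ : Q ≠ 0) (hfrob : ∀ a b : R, (a - b) ^ Q = a ^ Q - b ^ Q)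
    (x y z : R) :
    !![x, x ^ Q ^ 2, x ^ Q ^ 3; y, y ^ Q ^ 2, y ^ Q ^ 3; z, z ^ Q ^ 2, z ^ Q ^ 3].det =
      !![x, x ^ Q, x ^ Q ^ 2; y, y ^ Q, y ^ Q ^ 2; z, z ^ Q, z ^ Q ^ 2].det *
        dualBorges Q x y z := by
  have hx := pow_sq_eq_dicksonCoeff_left hQ x y
  have hy := pow_sq_eq_dicksonCoeff_right hQ hfrob x y
  rw [det_fin_three_of_col_recurrence hx hy (pow_cube_eq_of_pow_sq_eq hfrob hx)
    (pow_cube_eq_of_pow_sq_eq hfrob hy), det_moore_eq hQ hfrob, ← subspacePoly_pow hfrob,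
    dualBorges, ← pow_sub_one_mul hQ (subspacePoly Q x y z)]
  simp only [subspacePoly]
  ring

end Moore

section TotalDegree

variable {σ R : Type*} [Fintype σ] [DecidableEq σ] [CommRing R]

theorem prod_X_pow_univ (d : σ → ℕ) :
    ∏ j, (X j : MvPolynomial σ R) ^ d j = monomial (Finsupp.equivFunOnFinite.symm d) 1 := by
  rw [prod_X_pow]
  congr 2
  ext j
  simp

theorem isHomogeneous_det_X_pow (e : σ → ℕ) :
    (Matrix.of fun i j => (X i : MvPolynomial σ R) ^ e j).det.IsHomogeneous (∑ j, e j) := by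
  rw [Matrix.det_apply]
  refine IsHomogeneous.sum _ _ _ fun τ _ => ?_
  rw [Units.smul_def, ← mem_homogeneousSubmodule]
  refine zsmul_mem ?_ _
  rw [mem_homogeneousSubmodule]
  exact IsHomogeneous.prod _ _ _ fun j _ => isHomogeneous_X_pow _ _

theorem coeff_det_X_pow {e : σ → ℕ} (he : Function.Injective e) :
    (Matrix.of fun i j => (X i : MvPolynomial σ R) ^ e j).det.coeff
      (Finsupp.equivFunOnFinite.symm e) = 1 := by
  have hterm (τ : Equiv.Perm σ) : ∏ i, (X (τ i) : MvPolynomial σ R) ^ e i =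
      monomial (Finsupp.equivFunOnFinite.symm (e ∘ τ.symm)) 1 := by
    rw [← prod_X_pow_univ]
    exact Fintype.prod_equiv τ _ _ fun i => by simp
  rw [Matrix.det_apply, coeff_sum, Finset.sum_eq_single 1]
  · simp [prod_X_pow_univ]
  · intro τ _ hτ
    simp only [Matrix.of_apply, hterm, coeff_smul, coeff_monomial]
    rw [if_neg, smul_zero]
    intro h
    have h' : e ∘ τ.symm = e := Finsupp.equivFunOnFinite.symm.injective h
    refine hτ (Equiv.ext fun i => he ?_)
    simpa using (congrFun h' (τ i)).symm
  · simp

theorem totalDegree_det_X_pow [Nontrivial R] {e : σ → ℕ} (he : Function.Injective e) :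
    (Matrix.of fun i j => (X i : MvPolynomial σ R) ^ e j).det.totalDegree = ∑ j, e j := by
  refine (isHomogeneous_det_X_pow e).totalDegree fun h0 => ?_
  simpa [h0] using coeff_det_X_pow (R := R) he

end TotalDegree

theorem totalDegree_eq_sub_of_eq_mul {σ R : Type*} [CommRing R] [IsDomain R]
    {f g k : MvPolynomial σ R} (hf : f ≠ 0) (h : f = g * k) :
    k.totalDegree = f.totalDegree - g.totalDegree := by
  obtain ⟨hg, hk⟩ := mul_ne_zero_iff.mp (h ▸ hf)
  rw [h, totalDegree_mul_of_isDomain hg hk]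
  omega

theorem totalDegree_det_fin_three_X_pow {R : Type*} [CommRing R] [Nontrivial R] {b c : ℕ}
    (hb : 1 < b) (hc : b < c) :
    (!![X 0, X 0 ^ b, X 0 ^ c; X 1, X 1 ^ b, X 1 ^ c; X 2, X 2 ^ b, X 2 ^ c] :
      Matrix (Fin 3) (Fin 3) (MvPolynomial (Fin 3) R)).det.totalDegree = 1 + b + c := by
  have he : Function.Injective ![1, b, c] :=
    (Fin.strictMono_iff_lt_succ.2 fun i => by fin_cases i <;> simpa).injective
  convert totalDegree_det_X_pow (R := R) he using 3
  · ext i j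
    fin_cases i <;> fin_cases j <;> simp
  · simp [Fin.sum_univ_three]

/-- D₂ divides E₁ in F[X,Y,Z], and the quotient (the dual Borges/DGZ polynomial)
has total degree q⁶ − q². -/
theorem dual_borges_polynomial (p h q : ℕ) (hp : p.Prime) (hh : 1 ≤ h) (hq : q = p ^ h)
    (F : Type*) [Field F] [CharP F p]
    (X Y Z E1 D2 : MvPolynomial (Fin 3) F)
    (hX : X = MvPolynomial.X 0) (hY : Y = MvPolynomial.X 1) (hZ : Z = MvPolynomial.X 2)
    (hE1 : E1 = Matrix.det !![X, X ^ q ^ 4, X ^ q ^ 6;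
                              Y, Y ^ q ^ 4, Y ^ q ^ 6;
                              Z, Z ^ q ^ 4, Z ^ q ^ 6])
    (hD2 : D2 = Matrix.det !![X, X ^ q ^ 2, X ^ q ^ 4;
                              Y, Y ^ q ^ 2, Y ^ q ^ 4;
                              Z, Z ^ q ^ 2, Z ^ q ^ 4]) :
    D2 ∣ E1 ∧ ∃ Q : MvPolynomial (Fin 3) F,
      E1 = D2 * Q ∧ Q.totalDegree = q ^ 6 - q ^ 2 := by
  have : Fact p.Prime := ⟨hp⟩
  subst hX hY hZ
  have hfrob (a b : MvPolynomial (Fin 3) F) : (a - b) ^ q ^ 2 = a ^ q ^ 2 - b ^ q ^ 2 := by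
    rw [hq, ← pow_mul]
    exact sub_pow_char_pow a b _
  have hQ : 1 < q ^ 2 := by
    rw [hq, ← pow_mul]
    exact Nat.one_lt_pow (by omega) hp.one_lt
  rw [show q ^ 4 = (q ^ 2) ^ 2 by ring] at hE1 hD2
  rw [show q ^ 6 = (q ^ 2) ^ 3 by ring] at hE1 ⊢
  generalize q ^ 2 = Q at hQ hfrob hE1 hD2 ⊢
  have hE : E1 = D2 * dualBorges Q (X 0) (X 1) (X 2) := by
    rw [hE1, hD2]
    exact det_dual_moore_eq (by omega) hfrob _ _ _
  refine ⟨⟨_, hE⟩, _, hE, ?_⟩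
  have hdegE : E1.totalDegree = 1 + Q ^ 2 + Q ^ 3 := by
    rw [hE1]
    exact totalDegree_det_fin_three_X_pow (Nat.one_lt_pow two_ne_zero hQ)
      (Nat.pow_lt_pow_right hQ (by norm_num))
  have hdegD : D2.totalDegree = 1 + Q + Q ^ 2 := by
    rw [hD2]
    exact totalDegree_det_fin_three_X_pow hQ (by nlinarith)
  have hE0 : E1 ≠ 0 := by
    rintro rfl
    simp only [totalDegree_zero] at hdegE
    omega
  rw [totalDegree_eq_sub_of_eq_mul hE0 hE, hdegE, hdegD]
  omega
end
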